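/- arXiv:2412.14297 — 3 statements merged into one kernel-verified Lean document; each statement's English description precedes it below -/
import Mathlib

section
/- For p, q ∈ (0,1) define the binary KL divergence D(p‖q) = p·log(p/q) + (1-p)·log((1-p)/(1-q)), and for δ > 0 define g_δ(q) = inf{p ∈ [0,1] : D(p‖q) ≤ δ}. Then g_δ is nondecreasing in q on (0,1). -/
/-!
For `p ≤ q₁ ≤ q₂` the divergence `D(p‖q)` grows from `q₁` to `q₂`: by `log x ≥ 1 - 1/x`,
`D(p‖q₂) - D(p‖q₁) ≥ (q₂ - q₁) ((1 - p)/(1 - q₁) - p/q₁) ≥ 0`. Hence every `p ≤ q₁` in the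
`δ`-ball around `q₂` lies in the ball around `q₁`, while every `p > q₁` exceeds `g_δ(q₁) ≤ q₁`.
-/

/-- Binary KL divergence `D(p‖q) = p·log(p/q) + (1-p)·log((1-p)/(1-q))`
(with the convention `0·log 0 = 0`, which holds for `Real.log 0 = 0`). -/
noncomputable def bernKL (p q : ℝ) : ℝ :=
  p * Real.log (p / q) + (1 - p) * Real.log ((1 - p) / (1 - q))

/-- Lower endpoint of the binary-KL ball of radius `δ` around `q`. -/
noncomputable def gKL (δ q : ℝ) : ℝ :=
  sInf {p : ℝ | p ∈ Set.Icc (0 : ℝ) 1 ∧ bernKL p q ≤ δ}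

open Real Set

def bernKLBall (δ q : ℝ) : Set ℝ := {p | p ∈ Icc (0 : ℝ) 1 ∧ bernKL p q ≤ δ}

lemma gKL_eq_sInf_bernKLBall (δ q : ℝ) : gKL δ q = sInf (bernKLBall δ q) := rfl

lemma bddBelow_bernKLBall (δ q : ℝ) : BddBelow (bernKLBall δ q) := ⟨0, fun _ hp => hp.1.1⟩

@[simp]
lemma bernKL_self (q : ℝ) : bernKL q q = 0 := by
  simp [bernKL]

lemma self_mem_bernKLBall {δ q : ℝ} (hδ : 0 ≤ δ) (hq : q ∈ Icc (0 : ℝ) 1) :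
    q ∈ bernKLBall δ q :=
  ⟨hq, by rwa [bernKL_self]⟩

lemma mul_log_div_sub_mul_log_div (a : ℝ) {x y : ℝ} (hx : 0 < x) (hy : 0 < y) :
    a * log (a / y) - a * log (a / x) = a * log (x / y) := by
  rcases eq_or_ne a 0 with rfl | ha
  · simp
  rw [← mul_sub, ← log_div (div_ne_zero ha hy.ne') (div_ne_zero ha hx.ne')]
  congr 2
  field_simp

lemma bernKL_sub_bernKL (p : ℝ) {q₁ q₂ : ℝ} (hq₁ : q₁ ∈ Ioo (0 : ℝ) 1) (hq₂ : q₂ ∈ Ioo (0 : ℝ) 1) :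
    bernKL p q₂ - bernKL p q₁ = p * log (q₁ / q₂) + (1 - p) * log ((1 - q₁) / (1 - q₂)) := by
  rw [← mul_log_div_sub_mul_log_div p hq₁.1 hq₂.1,
    ← mul_log_div_sub_mul_log_div (1 - p) (sub_pos.2 hq₁.2) (sub_pos.2 hq₂.2)]
  unfold bernKL
  ring

lemma bernKL_le_bernKL_of_le {p q₁ q₂ : ℝ} (hp : 0 ≤ p) (hpq : p ≤ q₁) (hq₁ : 0 < q₁)
    (hq : q₁ ≤ q₂) (hq₂ : q₂ < 1) : bernKL p q₁ ≤ bernKL p q₂ := by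
  have hq₁' : 0 < 1 - q₁ := by linarith
  have hq₂' : 0 < 1 - q₂ := by linarith
  have hlog₁ : (q₁ - q₂) / q₁ ≤ log (q₁ / q₂) := by
    convert one_sub_inv_le_log_of_pos (div_pos hq₁ (hq₁.trans_le hq)) using 1
    field_simp
  have hlog₂ : (q₂ - q₁) / (1 - q₁) ≤ log ((1 - q₁) / (1 - q₂)) := by
    convert one_sub_inv_le_log_of_pos (div_pos hq₁' hq₂') using 1
    field_simp
    ring
  have hp_div : p / q₁ ≤ 1 := div_le_one_of_le₀ hpq hq₁.le
  have hp_div' : 1 ≤ (1 - p) / (1 - q₁) := (one_le_div hq₁').2 (by linarith)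
  rw [← sub_nonneg, bernKL_sub_bernKL p ⟨hq₁, by linarith⟩ ⟨by linarith, hq₂⟩]
  calc 0 ≤ (q₂ - q₁) * ((1 - p) / (1 - q₁) - p / q₁) :=
        mul_nonneg (sub_nonneg.2 hq) (by linarith)
    _ = p * ((q₁ - q₂) / q₁) + (1 - p) * ((q₂ - q₁) / (1 - q₁)) := by ring
    _ ≤ p * log (q₁ / q₂) + (1 - p) * log ((1 - q₁) / (1 - q₂)) := by
        gcongr
        linarith

/-- `g_δ` is nondecreasing in `q` on `(0, 1)`. -/
theorem stmt_7 (δ : ℝ) (hδ : 0 < δ) :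
    MonotoneOn (gKL δ) (Set.Ioo (0 : ℝ) 1) := by
  intro q₁ hq₁ q₂ hq₂ hq
  rw [gKL_eq_sInf_bernKLBall, gKL_eq_sInf_bernKLBall]
  refine le_csInf ⟨q₂, self_mem_bernKLBall hδ.le (Ioo_subset_Icc_self hq₂)⟩ fun p hp => ?_
  rcases le_or_gt p q₁ with hpq | hqp
  · exact csInf_le (bddBelow_bernKLBall δ q₁)
      ⟨hp.1, (bernKL_le_bernKL_of_le hp.1.1 hpq hq₁.1 hq hq₂.2).trans hp.2⟩
  · exact (csInf_le (bddBelow_bernKLBall δ q₁)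
      (self_mem_bernKLBall hδ.le (Ioo_subset_Icc_self hq₁))).trans hqp.le
end

section
/- Covering number comparison: let Π be a class of policies π : 𝒳 → [M], let h(z, a) be any real-valued function with |h(z_i, a)| ≤ c_i for all a, and for data points z_1,…,z_n define the normalized ℓ₂ distance ℓ₂(π, π') = √(Σᵢ (h(zᵢ, π(xᵢ)) - h(zᵢ, π'(xᵢ)))² / (4Σᵢ cᵢ²)) and the Hamming distance d_H(π, π') = (1/n)Σᵢ 1{π(xᵢ) ≠ π'(xᵢ)}. Then for any γ > 0, the γ-covering number of Π under ℓ₂ with respect to z_1,…,z_n is at most N_H(γ², Π), the worst-case γ²-covering number of Π under the Hamming distance over all finite point sets. -/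
open Finset

noncomputable def dupEquiv {n : ℕ} (k : Fin n → ℕ) :
    Fin (∑ i, k i) ≃ Σ i : Fin n, Fin (k i) :=
  (finCongr (by simp)).trans (Fintype.equivFin (Σ i : Fin n, Fin (k i))).symm

lemma sum_dup {𝒳 : Type*} {n : ℕ} (k : Fin n → ℕ) (x : Fin n → 𝒳) (f : 𝒳 → ℝ) :
    ∑ j : Fin (∑ i, k i), f (x (dupEquiv k j).1) = ∑ i, (k i : ℝ) * f (x i) := by
  rw [Equiv.sum_comp (dupEquiv k) (fun s : Σ i : Fin n, Fin (k i) => f (x s.1)),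
    ← Finset.univ_sigma_univ, Finset.sum_sigma]
  simp [mul_comm]

/-- Covering number comparison between the data-dependent normalized `ℓ₂`
distance and the worst-case Hamming covering numbers: if every finite point set
admits a Hamming `γ²`-cover of the policy class of size at most `N`, then the
data `z₁,…,zₙ` admit an `ℓ₂` `γ`-cover of size at most `N`. -/
theorem stmt_13 {𝒳 Z : Type*} {M n : ℕ}
    (Pol : Set (𝒳 → Fin M)) (z : Fin n → Z) (xc : Z → 𝒳)
    (h : Z → Fin M → ℝ) (c : Fin n → ℝ)
    (hbound : ∀ i : Fin n, ∀ a : Fin M, |h (z i) a| ≤ c i)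
    (γ : ℝ) (hγ : 0 < γ) (N : ℕ)
    -- `N ≥ N_H(γ², Π)`: every finite point set has a Hamming `γ²`-cover of size ≤ N
    (hHam : ∀ (m : ℕ) (pts : Fin m → 𝒳),
      ∃ S : Finset (𝒳 → Fin M), ↑S ⊆ Pol ∧ S.card ≤ N ∧
        ∀ π ∈ Pol, ∃ π' ∈ S,
          (1 / (m : ℝ)) * ∑ i : Fin m, (if π (pts i) ≠ π' (pts i) then (1 : ℝ) else 0)
            ≤ γ ^ 2) :
    -- then there is an `ℓ₂` `γ`-cover of size ≤ N with respect to `z₁,…,zₙ`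
    ∃ S : Finset (𝒳 → Fin M), ↑S ⊆ Pol ∧ S.card ≤ N ∧
      ∀ π ∈ Pol, ∃ π' ∈ S,
        Real.sqrt ((∑ i : Fin n, (h (z i) (π (xc (z i))) - h (z i) (π' (xc (z i)))) ^ 2)
            / (4 * ∑ i : Fin n, c i ^ 2)) ≤ γ := by
  classical
  set W : ℝ := ∑ i : Fin n, c i ^ 2 with hWdef
  by_cases hW : 0 < W
  · -- main case
    -- duplication counts
    set k : ℕ → Fin n → ℕ := fun K i => ⌈(K : ℝ) * c i ^ 2⌉₊ with hk
    set x : Fin n → 𝒳 := fun i => xc (z i) with hx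
    have hSex : ∀ K : ℕ, ∃ S : Finset (𝒳 → Fin M), ↑S ⊆ Pol ∧ S.card ≤ N ∧
        ∀ π ∈ Pol, ∃ π' ∈ S,
          (1 / ((∑ i, k K i : ℕ) : ℝ)) *
            ∑ j : Fin (∑ i, k K i), (if π (x (dupEquiv (k K) j).1) ≠ π' (x (dupEquiv (k K) j).1)
              then (1 : ℝ) else 0) ≤ γ ^ 2 :=
      fun K => hHam (∑ i, k K i) (fun j => x (dupEquiv (k K) j).1)
    choose S hS1 hS2 hS3 using hSex
    set P : (𝒳 → Fin M) → (Fin n → Fin M) := fun π i => π (x i) with hP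
    obtain ⟨b, hb⟩ := Finite.exists_infinite_fiber (fun K => (S K).image P)
    have hbinf : {K : ℕ | (S K).image P = b}.Infinite := by
      rw [Set.infinite_coe_iff] at hb
      exact hb.mono (fun K hK => by simpa using hK)
    obtain ⟨K₀, hK₀⟩ := hbinf.nonempty
    refine ⟨S K₀, hS1 K₀, hS2 K₀, fun π hπ => ?_⟩
    have hc : ∀ i : Fin n, 0 ≤ c i := fun i => (abs_nonneg _).trans (hbound i (π (x i)))
    -- choose a covering policy for each K
    choose π' hπ'mem hπ'bound using fun K => hS3 K π hπ
    -- second pigeonhole: a common pattern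
    haveI : Infinite {K : ℕ | (S K).image P = b} := hbinf.to_subtype
    obtain ⟨p, hp⟩ := Finite.exists_infinite_fiber
      (fun K : {K : ℕ | (S K).image P = b} => P (π' ↑K))
    have hG : {K : ℕ | (S K).image P = b ∧ P (π' K) = p}.Infinite := by
      rw [Set.infinite_coe_iff] at hp
      have h2 := hp.image (Subtype.val_injective.injOn)
      refine h2.mono ?_
      rintro K ⟨⟨K', hK'⟩, hmem, rfl⟩
      exact ⟨hK', by simpa using hmem⟩
    -- p is realized in S K₀
    obtain ⟨K₁, hK₁b, hK₁p⟩ := hG.nonempty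
    have hpb : p ∈ (S K₀).image P := by
      rw [hK₀]
      rw [← hK₁b, ← hK₁p]
      exact Finset.mem_image_of_mem P (hπ'mem K₁)
    obtain ⟨πs, hπsS, hπsP⟩ := Finset.mem_image.mp hpb
    refine ⟨πs, hπsS, ?_⟩
    have hπsx : ∀ i, πs (x i) = p i := fun i => congrFun hπsP i
    set D : ℝ := ∑ i : Fin n, (h (z i) (π (x i)) - h (z i) (p i)) ^ 2 with hD
    -- per-K bound
    have key : ∀ K ∈ {K : ℕ | (S K).image P = b ∧ P (π' K) = p}, 1 ≤ K →
        D ≤ 4 / K * (((K : ℝ) * W + n) * γ ^ 2) := by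
      rintro K ⟨-, hKp⟩ hK1
      have hKpos : (0 : ℝ) < K := by exact_mod_cast hK1
      have hπ'x : ∀ i, π' K (x i) = p i := fun i => congrFun hKp i
      set d : Fin n → ℝ := fun i => if π (x i) ≠ p i then (1 : ℝ) else 0 with hd
      have hd01 : ∀ i, 0 ≤ d i := fun i => by
        simp only [hd]; split <;> norm_num
      -- rewrite the Hamming sum
      have hsum : ∑ j : Fin (∑ i, k K i),
          (if π (x (dupEquiv (k K) j).1) ≠ π' K (x (dupEquiv (k K) j).1) then (1:ℝ) else 0)
          = ∑ i, (k K i : ℝ) * d i := by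
        rw [sum_dup (k K) x (fun y => if π y ≠ π' K y then (1:ℝ) else 0)]
        refine Finset.sum_congr rfl fun i _ => ?_
        rw [hπ'x i]
      have hb1 : ∑ i, (k K i : ℝ) * d i ≤ (∑ i, k K i : ℕ) * γ ^ 2 := by
        have := hπ'bound K
        rw [hsum] at this
        rcases Nat.eq_zero_or_pos (∑ i, k K i) with hm | hm
        · have hz := Finset.sum_eq_zero_iff.mp hm
          have h0 : ∑ i, (k K i : ℝ) * d i = 0 := Finset.sum_eq_zero fun i _ => by
            rw [hz i (Finset.mem_univ i)]; simp
          rw [h0, hm]; norm_num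
        · have hmR : (0 : ℝ) < (∑ i, k K i : ℕ) := by exact_mod_cast hm
          rw [one_div, inv_mul_le_iff₀ hmR] at this
          linarith [this]
      -- pointwise: D ≤ ∑ 4 c² d
      have hb2 : D ≤ ∑ i, 4 * c i ^ 2 * d i := by
        refine Finset.sum_le_sum fun i _ => ?_
        simp only [hd]
        by_cases hne : π (x i) = p i
        · simp [hne]
        · rw [if_pos hne]
          have h1 := abs_le.mp (hbound i (π (x i)))
          have h2 := abs_le.mp (hbound i (p i))
          nlinarith [h1.1, h1.2, h2.1, h2.2]
      have hb3 : ∑ i, 4 * c i ^ 2 * d i ≤ 4 / K * ∑ i, (k K i : ℝ) * d i := by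
        rw [Finset.mul_sum]
        refine Finset.sum_le_sum fun i _ => ?_
        have hle : (K : ℝ) * c i ^ 2 ≤ (k K i : ℝ) := Nat.le_ceil _
        have := hd01 i
        rw [div_mul_eq_mul_div, le_div_iff₀ hKpos]
        nlinarith
      have hb4 : ((∑ i, k K i : ℕ) : ℝ) ≤ (K : ℝ) * W + n := by
        push_cast
        calc ∑ i, ((k K i : ℕ) : ℝ) ≤ ∑ i, ((K : ℝ) * c i ^ 2 + 1) := by
              refine Finset.sum_le_sum fun i _ => ?_
              exact (Nat.ceil_lt_add_one (by positivity)).le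
          _ = (K : ℝ) * W + n := by
              rw [Finset.sum_add_distrib, ← Finset.mul_sum]
              simp [hWdef]
      calc D ≤ ∑ i, 4 * c i ^ 2 * d i := hb2
        _ ≤ 4 / K * ∑ i, (k K i : ℝ) * d i := hb3
        _ ≤ 4 / K * ((∑ i, k K i : ℕ) * γ ^ 2) := by
            refine mul_le_mul_of_nonneg_left hb1 (by positivity)
        _ ≤ 4 / K * (((K : ℝ) * W + n) * γ ^ 2) := by
            refine mul_le_mul_of_nonneg_left ?_ (by positivity)
            exact mul_le_mul_of_nonneg_right hb4 (by positivity)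
    -- limit argument
    have hDle : D / (4 * W) ≤ γ ^ 2 := by
      refine le_of_forall_pos_le_add fun ε hε => ?_
      obtain ⟨K, hKG, hKgt⟩ := hG.exists_gt (max 1 ⌈(n : ℝ) * γ ^ 2 / (ε * W)⌉₊)
      have hK1 : 1 ≤ K := le_of_lt (lt_of_le_of_lt (le_max_left _ _) hKgt)
      have hKpos : (0 : ℝ) < K := by exact_mod_cast hK1
      have hDK := key K hKG hK1
      have hfrac : (n : ℝ) * γ ^ 2 / ((K : ℝ) * W) ≤ ε := by
        have hceil : (n : ℝ) * γ ^ 2 / (ε * W) ≤ (K : ℝ) := by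
          have h1 : (⌈(n : ℝ) * γ ^ 2 / (ε * W)⌉₊ : ℝ) ≤ K := by
            exact_mod_cast (le_of_lt (lt_of_le_of_lt (le_max_right _ _) hKgt))
          exact (Nat.le_ceil _).trans h1
        rw [div_le_iff₀ (by positivity)] at hceil ⊢
        nlinarith
      have : D / (4 * W) ≤ γ ^ 2 + (n : ℝ) * γ ^ 2 / ((K : ℝ) * W) := by
        rw [div_le_iff₀ (by positivity)]
        have expand : (γ ^ 2 + (n : ℝ) * γ ^ 2 / ((K : ℝ) * W)) * (4 * W)
            = 4 / K * (((K : ℝ) * W + n) * γ ^ 2) := by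
          field_simp
        rw [expand]
        exact hDK
      linarith
    -- conclude
    have hgoal : (∑ i : Fin n, (h (z i) (π (x i)) - h (z i) (πs (x i))) ^ 2) / (4 * W) ≤ γ ^ 2 := by
      have : ∑ i : Fin n, (h (z i) (π (x i)) - h (z i) (πs (x i))) ^ 2 = D := by
        refine Finset.sum_congr rfl fun i _ => by rw [hπsx i]
      rw [this]
      exact hDle
    calc Real.sqrt _ ≤ Real.sqrt (γ ^ 2) := Real.sqrt_le_sqrt hgoal
      _ = γ := by rw [Real.sqrt_sq hγ.le]
  · -- degenerate case W ≤ 0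
    obtain ⟨S, hS1, hS2, hS3⟩ := hHam n (fun i => xc (z i))
    refine ⟨S, hS1, hS2, fun π hπ => ?_⟩
    obtain ⟨π', hπ'S, -⟩ := hS3 π hπ
    refine ⟨π', hπ'S, ?_⟩
    have hnum : 0 ≤ ∑ i : Fin n, (h (z i) (π (xc (z i))) - h (z i) (π' (xc (z i)))) ^ 2 :=
      Finset.sum_nonneg fun i _ => sq_nonneg _
    have hden : 4 * W ≤ 0 := by nlinarith [not_lt.mp hW]
    have hq : (∑ i : Fin n, (h (z i) (π (xc (z i))) - h (z i) (π' (xc (z i)))) ^ 2) / (4 * W) ≤ 0 :=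
      div_nonpos_iff.mpr (Or.inl ⟨hnum, hden⟩)
    rw [Real.sqrt_eq_zero'.mpr hq]
    exact hγ.le
end

section
/- For a Bernoulli reward, the robust value equals the KL-ball lower endpoint: if Y ~ Bernoulli(q) with q ∈ (0,1) and e^{-δ} < 1 - q (so the essential-infimum mass condition holds), then inf over distributions Q on {0,1} with D_KL(Q‖Bernoulli(q)) ≤ δ of E_Q[Y] equals g_δ(q) = inf{p ∈ [0,1] : D(p‖q) ≤ δ}. -/
open MeasureTheory

/-- KL divergence `D_KL(Q‖P) = E_Q[log dQ/dP]`. -/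
noncomputable def klDivergence {Ω : Type*} [MeasurableSpace Ω] (Q P : Measure Ω) : ℝ :=
  ∫ ω, Real.log ((Q.rnDeriv P ω).toReal) ∂Q

/-- The Bernoulli measure with success probability `p`, as a measure on `Bool`. -/
noncomputable def bernMeasure (p : ℝ) : Measure Bool :=
  ENNReal.ofReal p • Measure.dirac true + ENNReal.ofReal (1 - p) • Measure.dirac false

-- aux lemmas
lemma bool_ext {μ ν : Measure Bool} (h1 : μ {true} = ν {true})
    (h2 : μ {false} = ν {false}) : μ = ν := by
  classical
  ext s hs
  have hdecomp : s = (s ∩ {true}) ∪ (s ∩ {false}) := by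
    ext b; cases b <;> simp
  have hd : Disjoint (s ∩ {true}) (s ∩ {false}) := by
    rw [Set.disjoint_left]; rintro b ⟨-, hb1⟩ ⟨-, hb2⟩
    simp only [Set.mem_singleton_iff] at hb1 hb2; simp [hb1] at hb2
  have key : ∀ (a : Bool), s ∩ {a} = (if a ∈ s then ({a} : Set Bool) else ∅) := by
    intro a; by_cases h : a ∈ s
    · simp only [if_pos h]; ext b
      simp only [Set.mem_inter_iff, Set.mem_singleton_iff, iff_iff_implies_and_implies]
      exact ⟨fun hb => hb.2, fun hb => ⟨hb ▸ h, hb⟩⟩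
    · simp only [if_neg h]; ext b
      simp only [Set.mem_inter_iff, Set.mem_singleton_iff, Set.mem_empty_iff_false, iff_false]
      rintro ⟨hb, rfl⟩; exact h hb
  rw [hdecomp, measure_union hd (hs.inter (measurableSet_singleton _)),
    measure_union hd (hs.inter (measurableSet_singleton _)), key true, key false]
  by_cases h1' : true ∈ s <;> by_cases h2' : false ∈ s <;> simp [h1', h2', h1, h2]

lemma bern_true (p : ℝ) : bernMeasure p {true} = ENNReal.ofReal p := by
  simp [bernMeasure, Measure.dirac_apply]

lemma bern_false (p : ℝ) : bernMeasure p {false} = ENNReal.ofReal (1 - p) := by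
  simp [bernMeasure, Measure.dirac_apply]

lemma bern_prob {p : ℝ} (hp : p ∈ Set.Icc (0:ℝ) 1) : IsProbabilityMeasure (bernMeasure p) := by
  constructor
  simp [bernMeasure, Measure.dirac_apply]
  rw [← ENNReal.ofReal_add hp.1 (by linarith [hp.2])]
  norm_num

noncomputable def bdens (p q : ℝ) : Bool → ENNReal :=
  fun b => ENNReal.ofReal (if b then p / q else (1 - p) / (1 - q))

lemma bdens_meas (p q : ℝ) : Measurable (bdens p q) := measurable_of_countable _

-- integral over bernMeasure
lemma bern_integral {p : ℝ} (hp : p ∈ Set.Icc (0:ℝ) 1) (g : Bool → ℝ) :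
    ∫ b, g b ∂(bernMeasure p) = p * g true + (1 - p) * g false := by
  haveI : ∀ (c : ℝ) (a : Bool), IsFiniteMeasure (ENNReal.ofReal c • Measure.dirac a) := by
    intro c a
    refine ⟨?_⟩
    simp [Measure.smul_apply]
  rw [bernMeasure, integral_add_measure Integrable.of_finite Integrable.of_finite,
    integral_smul_measure, integral_smul_measure, integral_dirac, integral_dirac,
    ENNReal.toReal_ofReal hp.1, ENNReal.toReal_ofReal (by linarith [hp.2])]
  simp [smul_eq_mul]

lemma bern_withDensity {p q : ℝ} (hp : p ∈ Set.Icc (0:ℝ) 1) (hq : q ∈ Set.Ioo (0:ℝ) 1) :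
    (bernMeasure q).withDensity (bdens p q) = bernMeasure p := by
  apply bool_ext
  · rw [withDensity_apply _ (measurableSet_singleton _), lintegral_singleton, bern_true, bern_true,
      bdens]
    simp only [if_pos]
    rw [← ENNReal.ofReal_mul (div_nonneg hp.1 hq.1.le), div_mul_cancel₀ _ (ne_of_gt hq.1)]
  · rw [withDensity_apply _ (measurableSet_singleton _), lintegral_singleton, bern_false, bern_false,
      bdens]
    norm_num
    rw [← ENNReal.ofReal_mul (div_nonneg (by linarith [hp.2]) (by linarith [hq.2])),
      div_mul_cancel₀ _ (by linarith [hq.2] : (1:ℝ) - q ≠ 0)]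

lemma bern_abs {p q : ℝ} (hp : p ∈ Set.Icc (0:ℝ) 1) (hq : q ∈ Set.Ioo (0:ℝ) 1) :
    bernMeasure p ≪ bernMeasure q := by
  rw [← bern_withDensity hp hq]; exact withDensity_absolutelyContinuous _ _

lemma kl_eq {p q : ℝ} (hp : p ∈ Set.Icc (0:ℝ) 1) (hq : q ∈ Set.Ioo (0:ℝ) 1) :
    klDivergence (bernMeasure p) (bernMeasure q) = bernKL p q := by
  haveI := bern_prob (Set.mem_Icc_of_Ioo hq)
  have h := Measure.rnDeriv_withDensity (bernMeasure q) (bdens_meas p q)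
  rw [bern_withDensity hp hq] at h
  have h' : (bernMeasure p).rnDeriv (bernMeasure q) =ᵐ[bernMeasure p] bdens p q :=
    (bern_abs hp hq).ae_eq h
  have h'' : (fun ω => Real.log (((bernMeasure p).rnDeriv (bernMeasure q) ω).toReal))
      =ᵐ[bernMeasure p] (fun ω => Real.log ((bdens p q ω).toReal)) := by
    filter_upwards [h'] with ω hω; rw [hω]
  rw [klDivergence, integral_congr_ae h'', bern_integral hp, bernKL, bdens]
  have hnn1 : (0:ℝ) ≤ p / q := div_nonneg hp.1 hq.1.le
  have hnn2 : (0:ℝ) ≤ (1 - p) / (1 - q) := div_nonneg (by linarith [hp.2]) (by linarith [hq.2])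
  simp [bdens, ENNReal.toReal_ofReal hnn1, ENNReal.toReal_ofReal hnn2]


/-- For a Bernoulli(q) reward with `e^{-δ} < 1 - q`, the KL-robust value (the
infimum of `E_Q[Y]` over distributions `Q` on `{0,1}` within KL-radius `δ` of
Bernoulli(q)) equals the lower endpoint `g_δ(q)` of the binary-KL ball. -/
theorem stmt_18 (q δ : ℝ) (hq : q ∈ Set.Ioo (0 : ℝ) 1) (hδ : 0 < δ)
    (hmass : Real.exp (-δ) < 1 - q) :
    sInf {v : ℝ | ∃ Q : Measure Bool, IsProbabilityMeasure Q ∧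
        Q ≪ bernMeasure q ∧ klDivergence Q (bernMeasure q) ≤ δ ∧
        v = (Q {true}).toReal}
      = gKL δ q := by
  have hset : {v : ℝ | ∃ Q : Measure Bool, IsProbabilityMeasure Q ∧
        Q ≪ bernMeasure q ∧ klDivergence Q (bernMeasure q) ≤ δ ∧
        v = (Q {true}).toReal}
      = {p : ℝ | p ∈ Set.Icc (0:ℝ) 1 ∧ bernKL p q ≤ δ} := by
    ext v
    simp only [Set.mem_setOf_eq]
    constructor
    · rintro ⟨Q, hQ, habs, hkl, rfl⟩
      have hfin : Q {true} ≠ ⊤ := measure_ne_top _ _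
      have hle1 : Q {true} ≤ 1 := prob_le_one
      set p := (Q {true}).toReal with hpdef
      have hp0 : 0 ≤ p := ENNReal.toReal_nonneg
      have hp1 : p ≤ 1 := by
        rw [hpdef]
        calc (Q {true}).toReal ≤ (1 : ENNReal).toReal :=
          ENNReal.toReal_mono (by norm_num) hle1
        _ = 1 := by simp
      have huniv : Q {true} + Q {false} = 1 := by
        have hU : ({true} : Set Bool) ∪ {false} = Set.univ := by
          ext b; cases b <;> simp
        rw [← measure_union (by simp) (measurableSet_singleton _), hU, measure_univ]
      have hfalse : Q {false} = 1 - Q {true} :=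
        ENNReal.eq_sub_of_add_eq (by norm_num) (by rw [add_comm]; exact huniv)
      have hQeq : Q = bernMeasure p := by
        apply bool_ext
        · rw [bern_true, hpdef, ENNReal.ofReal_toReal hfin]
        · rw [bern_false, hfalse, ENNReal.ofReal_sub _ hp0, ENNReal.ofReal_one,
            hpdef, ENNReal.ofReal_toReal hfin]
      rw [hQeq, kl_eq ⟨hp0, hp1⟩ hq] at hkl
      exact ⟨⟨hp0, hp1⟩, hkl⟩
    · rintro ⟨hpmem, hkl⟩
      exact ⟨bernMeasure v, bern_prob hpmem, bern_abs hpmem hq,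
        by rw [kl_eq hpmem hq]; exact hkl,
        by rw [bern_true, ENNReal.toReal_ofReal hpmem.1]⟩
  rw [hset, gKL]
end
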